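/- Let ε ∈ (0,1), C, d ≥ 1, and s ∈ (0,d). Then for all sufficiently small δ ∈ 2^{-ℕ} the following holds. Let μ be a Borel probability measure on ℝ^d with mollified Riesz energy I_s^δ(μ) ≤ C, and let K ⊂ B(1) ⊂ ℝ^d be a Borel set with μ(K) ≥ δ^ε. Then there exists a nonempty family 𝒫 of dyadic δ-cubes meeting K which is a (δ,s,C')-set with C' ≤ O_d(C δ^{-3ε}), i.e. |𝒫 ∩ Q| ≤ C' Δ^s |𝒫| for every dyadic cube Q of side-length Δ ∈ [δ,1]. -/

import Mathlib

open MeasureTheory Metric Set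
open scoped ENNReal

noncomputable section

/-- Euclidean space `ℝ^d`. -/
abbrev Ed (d : ℕ) : Type := EuclideanSpace ℝ (Fin d)

/-- `ψ` is a standard approximate-identity profile on `ℝ^d`: radially decreasing,
`∫ ψ = 1`, and `1_{B(1/2)} ≤ ψ ≤ 1_{B(1)}`. -/
def IsApproxId (d : ℕ) (ψ : Ed d → ℝ) : Prop :=
  (∀ x y : Ed d, ‖x‖ ≤ ‖y‖ → ψ y ≤ ψ x) ∧
  (∫ x, ψ x = 1) ∧
  (∀ x : Ed d, ‖x‖ ≤ 1/2 → 1 ≤ ψ x) ∧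
  (∀ x : Ed d, ψ x ≤ 1) ∧
  (∀ x : Ed d, 0 ≤ ψ x) ∧
  (∀ x : Ed d, 1 < ‖x‖ → ψ x = 0)

/-- The mollified density `ν_δ(x) = (ν ∗ ψ_δ)(x)`, where `ψ_δ(x) = δ^{-d} ψ(x/δ)`. -/
def mollify (d : ℕ) (ψ : Ed d → ℝ) (δ : ℝ) (ν : Measure (Ed d)) (x : Ed d) : ℝ :=
  ∫ y, (δ ^ d)⁻¹ * ψ (δ⁻¹ • (x - y)) ∂ν

/-- The mollified Riesz energy `I_u^δ(ν) = ∬ |x−y|^{-u} ν_δ(x) ν_δ(y) dx dy`. -/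
def mollE (d : ℕ) (ψ : Ed d → ℝ) (u δ : ℝ) (ν : Measure (Ed d)) : ℝ≥0∞ :=
  ∫⁻ x, ∫⁻ y, edist x y ^ (-u) * ENNReal.ofReal (mollify d ψ δ ν x) *
    ENNReal.ofReal (mollify d ψ δ ν y) ∂volume ∂volume

/-- The dyadic cube of side-length `2⁻ⁿ` in `ℝ^d` with index `v ∈ ℤ^d`. -/
def dyCube (d : ℕ) (n : ℕ) (v : Fin d → ℤ) : Set (Ed d) :=
  {x : Ed d | ∀ i, x i ∈ Set.Ico ((v i : ℝ) * ((2:ℝ) ^ n)⁻¹) (((v i : ℝ) + 1) * ((2:ℝ) ^ n)⁻¹)}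

open Filter Topology

/-!
The energy bound controls the truncated Riesz potential `U x = ∫ max (dist x y) δ ^ (-s) dμ(y)`:
on pairs of `δ/2`-balls the mollified kernel dominates the truncated one, so `∫ U dμ ≲_d C`.
By Markov's inequality `U ≲ C δ^{-ε}` on a set `G` carrying half of the mass `δ^ε` of `K`, and
at every point of `G` the Frostman bound `μ (closedBall x r) ≤ r ^ s * U x` holds for `r ≥ δ`.
The `δ`-cubes are sorted by the dyadic size `2^{-j}` of their `K ∩ G`-mass; cubes lighter than
`2^{-(n+2)(d+1)}` carry a negligible total mass, so one of the `(n+2)(d+1)` remaining levels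
carries mass `≳ δ^ε / (n d)` and thus has `≳ 2^j δ^ε / (n d)` cubes. A cube of side `Δ`
contains at most `2^{j+1} μ (closedBall x (√d Δ)) ≲ 2^j U x Δ^s` of them, and the logarithmic
loss `n d` is absorbed by one more factor `δ^{-ε}` once `δ` is small.
-/

lemma measurable_of_radially_antitone {E : Type*} [NormedAddCommGroup E] [NormedSpace ℝ E]
    [MeasurableSpace E] [BorelSpace E] {f : E → ℝ} (hf : ∀ x y : E, ‖x‖ ≤ ‖y‖ → f y ≤ f x) :
    Measurable f := by
  rcases subsingleton_or_nontrivial E with hE | hE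
  · exact Subsingleton.measurable
  obtain ⟨e, he⟩ := exists_norm_eq E zero_le_one
  have hnorm : ∀ t : ℝ, ‖max t 0 • e‖ = max t 0 := fun t => by
    rw [norm_smul, he, mul_one, Real.norm_of_nonneg (le_max_right t 0)]
  have hprofile : f = (fun t => f (max t 0 • e)) ∘ norm := funext fun x => by
    have hx : ‖max ‖x‖ 0 • e‖ = ‖x‖ := by rw [hnorm, max_eq_left (norm_nonneg x)]
    exact le_antisymm (hf _ _ hx.le) (hf _ _ hx.ge)
  rw [hprofile]
  refine (Antitone.measurable fun t u htu => hf _ _ ?_).comp measurable_norm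
  rw [hnorm, hnorm]
  exact max_le_max htu le_rfl

lemma lintegral_lintegral_mul_lintegral_mul_lintegral {X A : Type*} [MeasurableSpace X]
    [MeasurableSpace A] {ν : Measure X} {μ : Measure A} [SFinite ν] [SFinite μ]
    {k : X → X → ℝ≥0∞} {g : X → A → ℝ≥0∞} (hk : Measurable (Function.uncurry k))
    (hg : Measurable (Function.uncurry g)) :
    ∫⁻ x, ∫⁻ y, k x y * (∫⁻ a, g x a ∂μ) * (∫⁻ b, g y b ∂μ) ∂ν ∂ν =
      ∫⁻ a, ∫⁻ b, ∫⁻ x, ∫⁻ y, k x y * g x a * g y b ∂ν ∂ν ∂μ ∂μ := by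
  set H : X × X → A × A → ℝ≥0∞ := fun z w => k z.1 z.2 * g z.1 w.1 * g z.2 w.2
  have hH : Measurable (Function.uncurry H) :=
    ((hk.comp (measurable_fst.fst.prodMk measurable_fst.snd)).mul
      (hg.comp (measurable_fst.fst.prodMk measurable_snd.fst))).mul
      (hg.comp (measurable_fst.snd.prodMk measurable_snd.snd))
  have hgx : ∀ x, Measurable (g x) := fun x => hg.comp measurable_prodMk_left
  have hinner : ∀ x y, k x y * (∫⁻ a, g x a ∂μ) * (∫⁻ b, g y b ∂μ) =
      ∫⁻ w, H (x, y) w ∂μ.prod μ := fun x y => by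
    rw [lintegral_prod (H (x, y)) (hH.comp measurable_prodMk_left).aemeasurable,
      ← lintegral_const_mul _ (hgx x), ← lintegral_mul_const _ ((hgx x).const_mul _)]
    exact lintegral_congr fun a => (lintegral_const_mul _ (hgx y)).symm
  calc ∫⁻ x, ∫⁻ y, k x y * (∫⁻ a, g x a ∂μ) * (∫⁻ b, g y b ∂μ) ∂ν ∂ν
      = ∫⁻ z, ∫⁻ w, H z w ∂μ.prod μ ∂ν.prod ν := by
        simp_rw [hinner]
        exact (lintegral_prod _ hH.lintegral_prod_right.aemeasurable).symm
    _ = ∫⁻ w, ∫⁻ z, H z w ∂ν.prod ν ∂μ.prod μ := lintegral_lintegral_swap hH.aemeasurable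
    _ = ∫⁻ a, ∫⁻ b, ∫⁻ x, ∫⁻ y, k x y * g x a * g y b ∂ν ∂ν ∂μ ∂μ := by
        have hswap := Measurable.lintegral_prod_right (ν := ν.prod ν) (f := fun w z => H z w)
          (hH.comp measurable_swap)
        rw [lintegral_prod (fun w => ∫⁻ z, H z w ∂ν.prod ν) hswap.aemeasurable]
        refine lintegral_congr fun a => lintegral_congr fun b => ?_
        exact lintegral_prod (fun z => H z (a, b)) (hH.comp measurable_prodMk_right).aemeasurable

lemma mul_measure_mul_measure_le_lintegral_lintegral {X Y : Type*} [MeasurableSpace X]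
    [MeasurableSpace Y] {μ : Measure X} {ν : Measure Y} {f : X → Y → ℝ≥0∞} {A : Set X}
    {B : Set Y} (hA : MeasurableSet A) (hB : MeasurableSet B) {L : ℝ≥0∞}
    (h : ∀ x ∈ A, ∀ y ∈ B, L ≤ f x y) :
    L * ν B * μ A ≤ ∫⁻ x, ∫⁻ y, f x y ∂ν ∂μ :=
  calc L * ν B * μ A = ∫⁻ _ in A, L * ν B ∂μ := (setLIntegral_const _ _).symm
    _ ≤ ∫⁻ x in A, ∫⁻ y in B, f x y ∂ν ∂μ := setLIntegral_mono' hA fun x hx =>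
        (setLIntegral_const B L).symm.trans_le (setLIntegral_mono' hB (h x hx))
    _ ≤ ∫⁻ x in A, ∫⁻ y, f x y ∂ν ∂μ := lintegral_mono fun _ => setLIntegral_le_lintegral _ _
    _ ≤ ∫⁻ x, ∫⁻ y, f x y ∂ν ∂μ := setLIntegral_le_lintegral _ _

lemma rpow_neg_max_div_two_pow_le {t δ s : ℝ} {d : ℕ} (ht : 0 ≤ t) (hδ : 0 < δ) (hs : 0 ≤ s)
    (hsd : s ≤ d) : max t δ ^ (-s) / 2 ^ d ≤ (t + δ) ^ (-s) := by
  have hmax : 0 < max t δ := lt_max_of_lt_right hδ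
  have h2 : ((2 : ℝ) ^ d)⁻¹ ≤ 2 ^ (-s) := by
    rw [← Real.rpow_natCast, ← Real.rpow_neg zero_le_two]
    exact Real.rpow_le_rpow_of_exponent_le one_le_two (neg_le_neg hsd)
  calc max t δ ^ (-s) / 2 ^ d ≤ 2 ^ (-s) * max t δ ^ (-s) := by
        rw [div_eq_inv_mul]; gcongr
    _ = (2 * max t δ) ^ (-s) := (Real.mul_rpow zero_le_two hmax.le).symm
    _ ≤ (t + δ) ^ (-s) := Real.rpow_le_rpow_of_nonpos (by positivity)
        (by linarith [le_max_left t δ, le_max_right t δ]) (neg_nonpos.mpr hs)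

def truncRieszPotential {X : Type*} [PseudoMetricSpace X] [MeasurableSpace X] (s δ : ℝ)
    (μ : Measure X) (x : X) : ℝ≥0∞ :=
  ∫⁻ y, ENNReal.ofReal (max (dist x y) δ ^ (-s)) ∂μ

lemma measurable_truncRieszPotential {X : Type*} [PseudoMetricSpace X] [SecondCountableTopology X]
    [MeasurableSpace X] [BorelSpace X] (s : ℝ) {δ : ℝ} (hδ : 0 < δ) (μ : Measure X) [SFinite μ] :
    Measurable (truncRieszPotential s δ μ) :=
  Measurable.lintegral_prod_right (f := fun x y => ENNReal.ofReal (max (dist x y) δ ^ (-s)))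
    ((continuous_dist.max continuous_const).rpow_const
      fun _ => Or.inl (lt_max_of_lt_right hδ).ne').measurable.ennreal_ofReal

lemma measure_closedBall_le_truncRieszPotential {X : Type*} [PseudoMetricSpace X]
    [MeasurableSpace X] [OpensMeasurableSpace X] (μ : Measure X) {s δ r : ℝ} (hs : 0 ≤ s)
    (hδ : 0 < δ) (hδr : δ ≤ r) (x : X) :
    μ (closedBall x r) ≤ ENNReal.ofReal (r ^ s) * truncRieszPotential s δ μ x := by
  have hr : 0 < r := hδ.trans_le hδr
  calc μ (closedBall x r)
      = ENNReal.ofReal (r ^ s) * (ENNReal.ofReal (r ^ (-s)) * μ (closedBall x r)) := by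
        rw [← mul_assoc, ← ENNReal.ofReal_mul (by positivity), ← Real.rpow_add hr, add_neg_cancel,
          Real.rpow_zero, ENNReal.ofReal_one, one_mul]
    _ ≤ ENNReal.ofReal (r ^ s) * truncRieszPotential s δ μ x := by
        gcongr
        calc ENNReal.ofReal (r ^ (-s)) * μ (closedBall x r)
            = ∫⁻ _ in closedBall x r, ENNReal.ofReal (r ^ (-s)) ∂μ := (setLIntegral_const _ _).symm
          _ ≤ ∫⁻ y in closedBall x r, ENNReal.ofReal (max (dist x y) δ ^ (-s)) ∂μ :=
              setLIntegral_mono' measurableSet_closedBall fun y hy => ENNReal.ofReal_le_ofReal <|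
                Real.rpow_le_rpow_of_nonpos (lt_max_of_lt_right hδ)
                  (max_le (mem_closedBall'.mp hy) hδr) (neg_nonpos.mpr hs)
          _ ≤ truncRieszPotential s δ μ x := setLIntegral_le_lintegral _ _

lemma le_measureReal_inter_setOf_lt {α : Type*} [MeasurableSpace α] {μ : Measure α}
    [IsFiniteMeasure μ] {f : α → ℝ≥0∞} (hf : AEMeasurable f μ) {E σ : ℝ} (hE : 0 < E) (hσ : 0 < σ)
    (hfE : ∫⁻ x, f x ∂μ ≤ ENNReal.ofReal E) {K : Set α} (hK : ENNReal.ofReal σ ≤ μ K) :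
    σ / 2 ≤ μ.real (K ∩ {x | f x < ENNReal.ofReal (2 * E / σ)}) := by
  have hT : 0 < 2 * E / σ := by positivity
  have hbad : μ.real {x | ENNReal.ofReal (2 * E / σ) ≤ f x} ≤ σ / 2 := by
    refine ENNReal.toReal_le_of_le_ofReal (by positivity) ?_
    calc μ {x | ENNReal.ofReal (2 * E / σ) ≤ f x}
        ≤ (∫⁻ x, f x ∂μ) / ENNReal.ofReal (2 * E / σ) :=
          meas_ge_le_lintegral_div hf (ENNReal.ofReal_pos.mpr hT).ne' ENNReal.ofReal_ne_top
      _ ≤ ENNReal.ofReal E / ENNReal.ofReal (2 * E / σ) := by gcongr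
      _ = ENNReal.ofReal (σ / 2) := by
          rw [← ENNReal.ofReal_div_of_pos hT]; congr 1; field_simp
  have hKσ : σ ≤ μ.real K := (ENNReal.ofReal_le_iff_le_toReal (measure_ne_top _ _)).mp hK
  have hsplit : μ.real K ≤ μ.real (K ∩ {x | f x < ENNReal.ofReal (2 * E / σ)}) +
      μ.real {x | ENNReal.ofReal (2 * E / σ) ≤ f x} := by
    refine (measureReal_mono (fun x hx => ?_) (measure_ne_top _ _)).trans
      (measureReal_union_le _ _)
    by_cases hfx : f x < ENNReal.ofReal (2 * E / σ)
    · exact Or.inl ⟨hx, hfx⟩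
    · exact Or.inr (not_lt.mp hfx)
  linarith

/-- The rescaled profile `ψ_δ`, so that `mollify d ψ δ ν x = ∫ y, scaledBump d ψ δ (x - y) ∂ν`. -/
def scaledBump (d : ℕ) (ψ : Ed d → ℝ) (δ : ℝ) (x : Ed d) : ℝ := (δ ^ d)⁻¹ * ψ (δ⁻¹ • x)

def unitBallVol (d : ℕ) : ℝ := (volume (ball (0 : Ed d) 1)).toReal

lemma unitBallVol_pos (d : ℕ) : 0 < unitBallVol d :=
  ENNReal.toReal_pos (measure_ball_pos volume 0 one_pos).ne' measure_ball_lt_top.ne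

lemma volume_ball_eq_unitBallVol {d : ℕ} (hd : 1 ≤ d) (x : Ed d) {r : ℝ} (hr : 0 ≤ r) :
    volume (ball x r) = ENNReal.ofReal (r ^ d * unitBallVol d) := by
  have : Nonempty (Fin d) := ⟨⟨0, hd⟩⟩
  rw [Measure.addHaar_ball volume x hr, finrank_euclideanSpace_fin, unitBallVol,
    ENNReal.ofReal_mul (by positivity), ENNReal.ofReal_toReal measure_ball_lt_top.ne]

section Energy

variable {d : ℕ} {ψ : Ed d → ℝ} {δ : ℝ}

lemma le_scaledBump (hψ : ∀ x : Ed d, ‖x‖ ≤ 1 / 2 → 1 ≤ ψ x) (hδ : 0 < δ) {x : Ed d}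
    (hx : ‖x‖ ≤ δ / 2) : (δ ^ d)⁻¹ ≤ scaledBump d ψ δ x := by
  refine le_mul_of_one_le_right (by positivity) (hψ _ ?_)
  rw [norm_smul, Real.norm_of_nonneg (by positivity)]
  calc δ⁻¹ * ‖x‖ ≤ δ⁻¹ * (δ / 2) := by gcongr
    _ = 1 / 2 := by field_simp

lemma ofReal_mollify (hψm : Measurable ψ) (hψ0 : ∀ x, 0 ≤ ψ x) (hψ1 : ∀ x, ψ x ≤ 1)
    (hδ : 0 < δ) (ν : Measure (Ed d)) [IsFiniteMeasure ν] (x : Ed d) :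
    ENNReal.ofReal (mollify d ψ δ ν x) = ∫⁻ a, ENNReal.ofReal (scaledBump d ψ δ (x - a)) ∂ν := by
  have hmeas : Measurable fun a => scaledBump d ψ δ (x - a) :=
    (hψm.comp ((measurable_const_sub x).const_smul δ⁻¹)).const_mul _
  refine ofReal_integral_eq_lintegral_ofReal (.of_bound hmeas.aestronglyMeasurable (δ ^ d)⁻¹ ?_)
    (.of_forall fun a => mul_nonneg (by positivity) (hψ0 _))
  refine .of_forall fun a => ?_
  rw [Real.norm_of_nonneg (mul_nonneg (by positivity) (hψ0 _))]
  exact mul_le_of_le_one_right (by positivity) (hψ1 _)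

lemma ofReal_mul_rpow_neg_max_le_lintegral (hd : 1 ≤ d) (hψ : ∀ x : Ed d, ‖x‖ ≤ 1 / 2 → 1 ≤ ψ x)
    (hδ : 0 < δ) {s : ℝ} (hs : 0 ≤ s) (hsd : s ≤ d) (a b : Ed d) :
    ENNReal.ofReal (unitBallVol d ^ 2 / 2 ^ (3 * d) * max (dist a b) δ ^ (-s)) ≤
      ∫⁻ x, ∫⁻ y, edist x y ^ (-s) * ENNReal.ofReal (scaledBump d ψ δ (x - a)) *
        ENNReal.ofReal (scaledBump d ψ δ (y - b)) := by
  have hab : 0 < dist a b + δ := by positivity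
  have hpt : ∀ x ∈ ball a (δ / 2), ∀ y ∈ ball b (δ / 2),
      ENNReal.ofReal ((dist a b + δ) ^ (-s) * (δ ^ d)⁻¹ * (δ ^ d)⁻¹) ≤
        edist x y ^ (-s) * ENNReal.ofReal (scaledBump d ψ δ (x - a)) *
          ENNReal.ofReal (scaledBump d ψ δ (y - b)) := fun x hx y hy => by
    rw [mem_ball, dist_eq_norm] at hx hy
    have hxy : dist x y ≤ dist a b + δ := by
      linarith [dist_triangle4 x a b y, dist_eq_norm x a, dist_eq_norm y b, dist_comm b y]
    rw [ENNReal.ofReal_mul (by positivity), ENNReal.ofReal_mul (by positivity)]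
    gcongr
    · rw [ENNReal.rpow_neg, Real.rpow_neg hab.le, ENNReal.ofReal_inv_of_pos (by positivity),
        edist_dist, ENNReal.ofReal_rpow_of_nonneg dist_nonneg hs]
      gcongr
    · exact le_scaledBump hψ hδ hx.le
    · exact le_scaledBump hψ hδ hy.le
  have hB := unitBallVol_pos d
  have hreal : unitBallVol d ^ 2 / 2 ^ (3 * d) * max (dist a b) δ ^ (-s) ≤
      (dist a b + δ) ^ (-s) * (δ ^ d)⁻¹ * (δ ^ d)⁻¹ * ((δ / 2) ^ d * unitBallVol d) *
        ((δ / 2) ^ d * unitBallVol d) :=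
    calc unitBallVol d ^ 2 / 2 ^ (3 * d) * max (dist a b) δ ^ (-s)
        = unitBallVol d ^ 2 / ((2 : ℝ) ^ d) ^ 2 * (max (dist a b) δ ^ (-s) / 2 ^ d) := by ring
      _ ≤ unitBallVol d ^ 2 / ((2 : ℝ) ^ d) ^ 2 * (dist a b + δ) ^ (-s) := by
          gcongr; exact rpow_neg_max_div_two_pow_le dist_nonneg hδ hs hsd
      _ = _ := by rw [div_pow]; field_simp
  refine le_trans ?_ (mul_measure_mul_measure_le_lintegral_lintegral measurableSet_ball
    measurableSet_ball hpt)
  rw [volume_ball_eq_unitBallVol hd _ (by positivity),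
    volume_ball_eq_unitBallVol hd _ (by positivity), ← ENNReal.ofReal_mul, ← ENNReal.ofReal_mul]
  exacts [ENNReal.ofReal_le_ofReal hreal, by positivity, by positivity]

lemma ofReal_mul_lintegral_truncRieszPotential_le_mollE (hd : 1 ≤ d)
    (hmono : ∀ x y : Ed d, ‖x‖ ≤ ‖y‖ → ψ y ≤ ψ x) (hψ : ∀ x : Ed d, ‖x‖ ≤ 1 / 2 → 1 ≤ ψ x)
    (hψ1 : ∀ x, ψ x ≤ 1) (hψ0 : ∀ x, 0 ≤ ψ x) (hδ : 0 < δ) {s : ℝ} (hs : 0 ≤ s) (hsd : s ≤ d)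
    (μ : Measure (Ed d)) [IsFiniteMeasure μ] :
    ENNReal.ofReal (unitBallVol d ^ 2 / 2 ^ (3 * d)) * ∫⁻ x, truncRieszPotential s δ μ x ∂μ ≤
      mollE d ψ s δ μ := by
  have hψm := measurable_of_radially_antitone hmono
  have hg : Measurable (Function.uncurry fun x a : Ed d =>
      ENNReal.ofReal (scaledBump d ψ δ (x - a))) :=
    ((hψm.comp ((measurable_fst.sub measurable_snd).const_smul δ⁻¹)).const_mul _).ennreal_ofReal
  have hk : Measurable (Function.uncurry fun x y : Ed d => edist x y ^ (-s)) :=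
    measurable_edist.pow_const _
  calc ENNReal.ofReal (unitBallVol d ^ 2 / 2 ^ (3 * d)) * ∫⁻ x, truncRieszPotential s δ μ x ∂μ
      = ∫⁻ a, ∫⁻ b, ENNReal.ofReal
          (unitBallVol d ^ 2 / 2 ^ (3 * d) * max (dist a b) δ ^ (-s)) ∂μ ∂μ := by
        rw [← lintegral_const_mul' _ _ ENNReal.ofReal_ne_top]
        refine lintegral_congr fun a => ?_
        rw [truncRieszPotential, ← lintegral_const_mul' _ _ ENNReal.ofReal_ne_top]
        exact lintegral_congr fun b => (ENNReal.ofReal_mul (by positivity)).symm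
    _ ≤ _ := lintegral_mono fun a => lintegral_mono fun b =>
        ofReal_mul_rpow_neg_max_le_lintegral hd hψ hδ hs hsd a b
    _ = mollE d ψ s δ μ := by
        rw [mollE, ← lintegral_lintegral_mul_lintegral_mul_lintegral hk hg]
        simp only [ofReal_mollify hψm hψ0 hψ1 hδ]

end Energy

theorem exists_measureReal_closedBall_le_of_mollE_le {d : ℕ} (hd : 1 ≤ d) {ψ : Ed d → ℝ}
    (hψ : IsApproxId d ψ) {s δ C σ : ℝ} (hs : 0 ≤ s) (hsd : s ≤ d) (hδ : 0 < δ) (hC : 0 < C)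
    (hσ : 0 < σ) {μ : Measure (Ed d)} [IsFiniteMeasure μ]
    (hE : mollE d ψ s δ μ ≤ ENNReal.ofReal C) {K : Set (Ed d)} (hK : ENNReal.ofReal σ ≤ μ K) :
    ∃ G, MeasurableSet G ∧ σ / 2 ≤ μ.real (K ∩ G) ∧ ∀ x ∈ G, ∀ r, δ ≤ r →
      μ.real (closedBall x r) ≤ 2 * (C / (unitBallVol d ^ 2 / 2 ^ (3 * d))) / σ * r ^ s := by
  obtain ⟨hmono, -, hone, hle, hnn, -⟩ := hψ
  set c := unitBallVol d ^ 2 / 2 ^ (3 * d)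
  have hc : 0 < c := by have := unitBallVol_pos d; positivity
  set U := truncRieszPotential s δ μ
  have hU : ∫⁻ x, U x ∂μ ≤ ENNReal.ofReal (C / c) := by
    rw [ENNReal.ofReal_div_of_pos hc, ENNReal.le_div_iff_mul_le (.inl (by simpa using hc))
      (.inl ENNReal.ofReal_ne_top), mul_comm]
    exact (ofReal_mul_lintegral_truncRieszPotential_le_mollE hd hmono hone hle hnn hδ hs hsd
      μ).trans hE
  refine ⟨{x | U x < ENNReal.ofReal (2 * (C / c) / σ)},
    measurableSet_lt (measurable_truncRieszPotential s hδ μ) measurable_const,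
    le_measureReal_inter_setOf_lt (measurable_truncRieszPotential s hδ μ).aemeasurable
      (by positivity) hσ hU hK, fun x hx r hr => ?_⟩
  have hr0 : 0 ≤ r := hδ.le.trans hr
  refine ENNReal.toReal_le_of_le_ofReal (by positivity) ?_
  calc μ (closedBall x r) ≤ ENNReal.ofReal (r ^ s) * U x :=
        measure_closedBall_le_truncRieszPotential μ hs hδ hr x
    _ ≤ ENNReal.ofReal (r ^ s) * ENNReal.ofReal (2 * (C / c) / σ) := by gcongr; exact hx.le
    _ = ENNReal.ofReal (2 * (C / c) / σ * r ^ s) := by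
        rw [← ENNReal.ofReal_mul (by positivity), mul_comm]

lemma mem_dyCube_iff {d n : ℕ} {v : Fin d → ℤ} {x : Ed d} :
    x ∈ dyCube d n v ↔ ∀ i, ⌊x i * 2 ^ n⌋ = v i := by
  have h2 : (0 : ℝ) < 2 ^ n := by positivity
  simp only [dyCube, mem_ofPred_eq, mem_Ico, Int.floor_eq_iff, ← div_eq_mul_inv,
    div_le_iff₀ h2, lt_div_iff₀ h2]

lemma measurableSet_dyCube (d n : ℕ) (v : Fin d → ℤ) : MeasurableSet (dyCube d n v) := by
  have : dyCube d n v = ⋂ i, (fun x : Ed d => x i) ⁻¹'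
      Ico ((v i : ℝ) * ((2 : ℝ) ^ n)⁻¹) (((v i : ℝ) + 1) * ((2 : ℝ) ^ n)⁻¹) := by
    ext x; simp [dyCube]
  rw [this]
  exact .iInter fun i => measurableSet_Ico.preimage (by fun_prop)

lemma disjoint_dyCube {d n : ℕ} {v w : Fin d → ℤ} (hvw : v ≠ w) :
    Disjoint (dyCube d n v) (dyCube d n w) := by
  refine disjoint_left.mpr fun x hv hw => hvw (funext fun i => ?_)
  rw [mem_dyCube_iff] at hv hw
  rw [← hv i, hw i]

lemma dist_le_of_mem_dyCube {d m : ℕ} {w : Fin d → ℤ} {x y : Ed d}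
    (hx : x ∈ dyCube d m w) (hy : y ∈ dyCube d m w) :
    dist x y ≤ √d * ((2 : ℝ) ^ m)⁻¹ := by
  have hcoord : ∀ i, dist (x i) (y i) ^ 2 ≤ (((2 : ℝ) ^ m)⁻¹) ^ 2 := fun i => by
    have hxy : |x i - y i| ≤ ((2 : ℝ) ^ m)⁻¹ := by
      rw [abs_sub_le_iff]
      constructor <;> nlinarith [(hx i).1, (hx i).2, (hy i).1, (hy i).2]
    rw [Real.dist_eq]
    exact pow_le_pow_left₀ (abs_nonneg _) hxy 2
  calc dist x y = √(∑ i, dist (x i) (y i) ^ 2) := EuclideanSpace.dist_eq x y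
    _ ≤ √(d * (((2 : ℝ) ^ m)⁻¹) ^ 2) := by
        gcongr
        simpa using Finset.sum_le_sum fun i (_ : i ∈ Finset.univ) => hcoord i
    _ = √d * ((2 : ℝ) ^ m)⁻¹ := by
        rw [Real.sqrt_mul (Nat.cast_nonneg d), Real.sqrt_sq (by positivity)]

def dyBox (d n : ℕ) : Finset (Fin d → ℤ) :=
  Fintype.piFinset fun _ => Finset.Icc (-2 ^ n) (2 ^ n)

lemma card_dyBox_le (d n : ℕ) : (dyBox d n).card ≤ 2 ^ ((n + 2) * d) := by
  have hIcc : (Finset.Icc (-2 ^ n : ℤ) (2 ^ n)).card = 2 ^ (n + 1) + 1 := by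
    rw [Int.card_Icc, show (2 : ℤ) ^ n + 1 - -2 ^ n = ((2 ^ (n + 1) + 1 : ℕ) : ℤ) by
      push_cast; ring, Int.toNat_natCast]
  rw [dyBox, Fintype.card_piFinset, Finset.prod_const, Finset.card_univ, Fintype.card_fin, hIcc,
    pow_mul]
  refine Nat.pow_le_pow_left ?_ d
  have := Nat.one_le_two_pow (n := n + 1)
  rw [pow_succ _ (n + 1)]
  omega

lemma exists_mem_dyBox_mem_dyCube {d : ℕ} (n : ℕ) {x : Ed d} (hx : ‖x‖ ≤ 1) :
    ∃ v ∈ dyBox d n, x ∈ dyCube d n v := by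
  refine ⟨fun i => ⌊x i * 2 ^ n⌋, Fintype.mem_piFinset.mpr fun i => ?_,
    mem_dyCube_iff.mpr fun i => rfl⟩
  have hxi : |x i| ≤ 1 := (PiLp.norm_apply_le x i).trans hx
  have h2 : (0 : ℝ) < 2 ^ n := by positivity
  rw [abs_le] at hxi
  rw [Finset.mem_Icc, Int.le_floor, Int.floor_le_iff]
  push_cast
  constructor <;> nlinarith

lemma measureReal_le_sum_dyBox {d : ℕ} (n : ℕ) (μ : Measure (Ed d)) [IsFiniteMeasure μ]
    {S : Set (Ed d)} (hS : S ⊆ closedBall 0 1) :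
    μ.real S ≤ ∑ v ∈ dyBox d n, μ.real (dyCube d n v ∩ S) := by
  refine (measureReal_mono (fun x hx => ?_) (measure_ne_top _ _)).trans
    (measureReal_biUnion_finset_le _ _)
  obtain ⟨v, hv, hxv⟩ := exists_mem_dyBox_mem_dyCube n (mem_closedBall_zero_iff.mp (hS hx))
  exact mem_biUnion hv ⟨hxv, hx⟩

lemma card_mul_le_measureReal_closedBall {d n m : ℕ} {μ : Measure (Ed d)} [IsFiniteMeasure μ]
    {S : Set (Ed d)} (hS : MeasurableSet S) {F : Finset (Fin d → ℤ)} {w : Fin d → ℤ} {a : ℝ}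
    (hF : ∀ v ∈ F, a ≤ μ.real (dyCube d n v ∩ S) ∧ dyCube d n v ⊆ dyCube d m w)
    {x : Ed d} (hx : x ∈ dyCube d m w) :
    F.card * a ≤ μ.real (closedBall x (√d * ((2 : ℝ) ^ m)⁻¹)) := by
  have hdisj : (F : Set (Fin d → ℤ)).PairwiseDisjoint fun v => dyCube d n v ∩ S :=
    fun v _ v' _ hvv' => (disjoint_dyCube hvv').mono inter_subset_left inter_subset_left
  calc F.card * a ≤ ∑ v ∈ F, μ.real (dyCube d n v ∩ S) := by
        simpa using F.card_nsmul_le_sum _ a fun v hv => (hF v hv).1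
    _ = μ.real (⋃ v ∈ F, dyCube d n v ∩ S) :=
        (measureReal_biUnion_finset hdisj fun v _ => (measurableSet_dyCube d n v).inter hS).symm
    _ ≤ μ.real (closedBall x (√d * ((2 : ℝ) ^ m)⁻¹)) := by
        refine measureReal_mono (iUnion₂_subset fun v hv y hy => ?_)
        exact mem_closedBall.mpr (dist_le_of_mem_dyCube ((hF v hv).2 hy.1) hx)

lemma exists_dyadic_level_subset {ι : Type*} (V : Finset ι) (f : ι → ℝ) (hf : ∀ v ∈ V, f v ≤ 1)
    (M : ℕ) : ∃ j : ℕ, ∃ P ⊆ V, (∀ v ∈ P, ((2 : ℝ) ^ (j + 1))⁻¹ < f v ∧ f v ≤ ((2 : ℝ) ^ j)⁻¹) ∧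
      ∑ v ∈ V, f v ≤ M * ∑ v ∈ P, f v + V.card * ((2 : ℝ) ^ M)⁻¹ := by
  classical
  set level : ι → ℕ := fun v => Nat.findGreatest (fun j => f v ≤ ((2 : ℝ) ^ j)⁻¹) M
  have hle_level : ∀ v ∈ V, f v ≤ ((2 : ℝ) ^ level v)⁻¹ := fun v hv =>
    Nat.findGreatest_spec (P := fun j => f v ≤ ((2 : ℝ) ^ j)⁻¹) (Nat.zero_le M)
      (by simpa using hf v hv)
  have hlt_level : ∀ v, level v < M → ((2 : ℝ) ^ (level v + 1))⁻¹ < f v := fun v hv =>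
    not_le.mp (Nat.findGreatest_is_greatest (Nat.lt_succ_self _) hv)
  set H := V.filter fun v => level v < M
  set S : ℕ → ℝ := fun j => ∑ v ∈ H with level v = j, f v
  obtain ⟨j, hj⟩ : ∃ j, ∀ j' ∈ Finset.range M, S j' ≤ S j := by
    rcases (Finset.range M).eq_empty_or_nonempty with h | h
    · exact ⟨0, by simp [h]⟩
    · obtain ⟨j, -, hj⟩ := (Finset.range M).exists_max_image S h
      exact ⟨j, hj⟩
  refine ⟨j, H.filter (level · = j), (Finset.filter_subset _ _).trans (Finset.filter_subset _ _),
    fun v hv => ?_, ?_⟩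
  · obtain ⟨⟨hvV, hvM⟩, rfl⟩ := by simpa [H] using hv
    exact ⟨hlt_level v hvM, hle_level v hvV⟩
  have hheavy : ∑ v ∈ H, f v ≤ M * S j := by
    rw [← Finset.sum_fiberwise_of_maps_to (t := Finset.range M) (g := level)
      (fun v hv => Finset.mem_range.mpr (Finset.mem_filter.mp hv).2)]
    simpa using Finset.sum_le_card_nsmul _ _ _ hj
  have hlight : ∑ v ∈ V with ¬level v < M, f v ≤ V.card * ((2 : ℝ) ^ M)⁻¹ := by
    refine (Finset.sum_le_card_nsmul _ _ ((2 : ℝ) ^ M)⁻¹ fun v hv => ?_).trans ?_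
    · obtain ⟨hvV, hvM⟩ := Finset.mem_filter.mp hv
      have hvM : level v = M := le_antisymm (Nat.findGreatest_le M) (not_lt.mp hvM)
      exact hvM ▸ hle_level v hvV
    · rw [nsmul_eq_mul]
      gcongr ?_ * _
      exact_mod_cast Finset.card_filter_le _ _
  rw [← Finset.sum_filter_add_sum_filter_not V (fun v => level v < M)]
  exact add_le_add hheavy hlight

lemma exists_dyadic_level_dyCube_family {d n : ℕ} {μ : Measure (Ed d)} [IsProbabilityMeasure μ]
    {S : Set (Ed d)} (hS : S ⊆ closedBall 0 1) {τ : ℝ} (hτ : ((2 : ℝ) ^ n)⁻¹ ≤ 2 * τ)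
    (hSτ : τ ≤ μ.real S) :
    ∃ j : ℕ, ∃ P : Finset (Fin d → ℤ), P.Nonempty ∧
      (∀ v ∈ P, ((2 : ℝ) ^ (j + 1))⁻¹ < μ.real (dyCube d n v ∩ S)) ∧
      τ * 2 ^ j ≤ 2 * ((n + 2) * (d + 1)) * P.card := by
  set M := (n + 2) * (d + 1)
  obtain ⟨j, P, -, hband, hsum⟩ := exists_dyadic_level_subset (dyBox d n)
    (fun v => μ.real (dyCube d n v ∩ S)) (fun _ _ => measureReal_le_one) M
  have hlight : (dyBox d n).card * ((2 : ℝ) ^ M)⁻¹ ≤ ((2 : ℝ) ^ n)⁻¹ / 4 := by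
    have hcard : ((dyBox d n).card : ℝ) ≤ 2 ^ ((n + 2) * d) := by
      exact_mod_cast card_dyBox_le d n
    have h2M : (2 : ℝ) ^ M = 2 ^ ((n + 2) * d) * 2 ^ n * 4 := by ring
    calc (dyBox d n).card * ((2 : ℝ) ^ M)⁻¹ ≤ 2 ^ ((n + 2) * d) * ((2 : ℝ) ^ M)⁻¹ := by gcongr
      _ = ((2 : ℝ) ^ n)⁻¹ / 4 := by rw [h2M]; field_simp
  have hPsum : ∑ v ∈ P, μ.real (dyCube d n v ∩ S) ≤ P.card * ((2 : ℝ) ^ j)⁻¹ := by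
    simpa using Finset.sum_le_card_nsmul _ _ _ fun v hv => (hband v hv).2
  have hτpos : 0 < τ := by linarith [show (0 : ℝ) < ((2 : ℝ) ^ n)⁻¹ by positivity]
  have hmass : τ ≤ 2 * M * (P.card * ((2 : ℝ) ^ j)⁻¹) := by
    have := (hSτ.trans (measureReal_le_sum_dyBox n μ hS)).trans hsum
    have hM : (0 : ℝ) ≤ M := M.cast_nonneg
    nlinarith [mul_le_mul_of_nonneg_left hPsum hM]
  refine ⟨j, P, Finset.nonempty_iff_ne_empty.mpr fun hP => ?_, fun v hv => (hband v hv).1, ?_⟩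
  · simp [hP] at hmass
    linarith
  · have h2j : (0 : ℝ) < 2 ^ j := by positivity
    calc τ * 2 ^ j ≤ 2 * M * (P.card * ((2 : ℝ) ^ j)⁻¹) * 2 ^ j := by gcongr
      _ = 2 * ((n + 2) * (d + 1)) * P.card := by simp only [M]; push_cast; field_simp

theorem exists_dyCube_family_card_le {d n : ℕ} (hd : 1 ≤ d) {μ : Measure (Ed d)}
    [IsProbabilityMeasure μ] {K G : Set (Ed d)} (hK : K ⊆ closedBall 0 1) (hKm : MeasurableSet K)
    (hGm : MeasurableSet G) {s T τ : ℝ} (hτ : ((2 : ℝ) ^ n)⁻¹ ≤ 2 * τ)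
    (hKG : τ ≤ μ.real (K ∩ G))
    (hball : ∀ x ∈ G, ∀ r, ((2 : ℝ) ^ n)⁻¹ ≤ r → μ.real (closedBall x r) ≤ T * r ^ s) :
    ∃ P : Finset (Fin d → ℤ), P.Nonempty ∧ (∀ v ∈ P, (dyCube d n v ∩ K).Nonempty) ∧
      ∀ m ≤ n, ∀ w : Fin d → ℤ,
        (Nat.card {v : Fin d → ℤ // v ∈ P ∧ dyCube d n v ⊆ dyCube d m w} : ℝ) ≤
          4 * ((n + 2) * (d + 1)) * T / τ * (√d * ((2 : ℝ) ^ m)⁻¹) ^ s * P.card := by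
  classical
  obtain ⟨j, P, hPne, hband, hcard⟩ :=
    exists_dyadic_level_dyCube_family (inter_subset_left.trans hK) hτ hKG
  have hmem : ∀ v ∈ P, (dyCube d n v ∩ (K ∩ G)).Nonempty := fun v hv =>
    nonempty_of_measureReal_ne_zero ((lt_trans (by positivity) (hband v hv)).ne')
  refine ⟨P, hPne, fun v hv => (hmem v hv).mono (inter_subset_inter_right _ inter_subset_left),
    fun m hm w => ?_⟩
  set r := √d * ((2 : ℝ) ^ m)⁻¹
  have hr : ((2 : ℝ) ^ n)⁻¹ ≤ r := by
    have hd' : (1 : ℝ) ≤ √d := Real.one_le_sqrt.mpr (by exact_mod_cast hd)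
    calc ((2 : ℝ) ^ n)⁻¹ ≤ ((2 : ℝ) ^ m)⁻¹ := by gcongr; norm_num
      _ ≤ r := le_mul_of_one_le_left (by positivity) hd'
  set F := P.filter fun v => dyCube d n v ⊆ dyCube d m w
  have hF : Nat.card {v : Fin d → ℤ // v ∈ P ∧ dyCube d n v ⊆ dyCube d m w} = F.card := by
    rw [← Nat.card_eq_finsetCard]
    exact Nat.card_congr (Equiv.subtypeEquivRight fun v => by simp [F])
  have hTr : 0 ≤ T * r ^ s := by
    obtain ⟨x, hx⟩ := hmem _ hPne.choose_spec
    exact measureReal_nonneg.trans (hball x hx.2.2 r hr)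
  have hcount : F.card * ((2 : ℝ) ^ (j + 1))⁻¹ ≤ T * r ^ s := by
    rcases F.eq_empty_or_nonempty with hFe | ⟨v₀, hv₀⟩
    · simpa [hFe] using hTr
    obtain ⟨x₀, hx₀⟩ := hmem v₀ (Finset.mem_filter.mp hv₀).1
    refine (card_mul_le_measureReal_closedBall (n := n) (hKm.inter hGm) (fun v hv => ?_)
      ((Finset.mem_filter.mp hv₀).2 hx₀.1)).trans (hball x₀ hx₀.2.2 r hr)
    exact ⟨(hband v (Finset.mem_filter.mp hv).1).le, (Finset.mem_filter.mp hv).2⟩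
  have hτpos : 0 < τ := by linarith [show (0 : ℝ) < ((2 : ℝ) ^ n)⁻¹ by positivity]
  have h2j : (2 : ℝ) ^ j ≤ 2 * ((n + 2) * (d + 1)) * P.card / τ := by
    rw [le_div_iff₀ hτpos]; linarith
  rw [hF]
  calc (F.card : ℝ) = F.card * ((2 : ℝ) ^ (j + 1))⁻¹ * 2 ^ (j + 1) := by field_simp
    _ ≤ T * r ^ s * 2 ^ (j + 1) := by gcongr
    _ = 2 * (T * r ^ s) * 2 ^ j := by ring
    _ ≤ 2 * (T * r ^ s) * (2 * ((n + 2) * (d + 1)) * P.card / τ) := by gcongr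
    _ = 4 * ((n + 2) * (d + 1)) * T / τ * r ^ s * P.card := by ring

lemma eventually_mul_add_two_le_two_pow_rpow {ε : ℝ} (hε : 0 < ε) (a : ℝ) :
    ∀ᶠ n : ℕ in atTop, a * (n + 2) ≤ ((2 : ℝ) ^ n) ^ ε := by
  have hr : 1 < (2 : ℝ) ^ ε := Real.one_lt_rpow one_lt_two hε
  have hlim : Tendsto (fun n : ℕ => a * (n + 2) / ((2 : ℝ) ^ ε) ^ n) atTop (𝓝 0) := by
    have := ((tendsto_pow_const_div_const_pow_of_one_lt 1 hr).add
      ((tendsto_pow_const_div_const_pow_of_one_lt 0 hr).const_mul 2)).const_mul a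
    simp only [pow_one, pow_zero, mul_zero, add_zero] at this
    refine this.congr fun n => ?_
    ring
  filter_upwards [hlim.eventually_le_const zero_lt_one] with n hn
  rwa [div_le_one (by positivity), Real.rpow_pow_comm zero_le_two] at hn

lemma rpow_sqrt_mul_le {d : ℕ} (hd : 1 ≤ d) {Δ s : ℝ} (hΔ : 0 ≤ Δ) (hsd : s ≤ d) :
    (√d * Δ) ^ s ≤ √d ^ d * Δ ^ s := by
  rw [Real.mul_rpow (Real.sqrt_nonneg _) hΔ]
  gcongr
  exact (Real.rpow_le_rpow_of_exponent_le (Real.one_le_sqrt.mpr (Nat.one_le_cast.mpr hd))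
    hsd).trans_eq (Real.rpow_natCast _ _)

theorem statement9_general (ε : ℝ) (hε : ε ∈ Set.Ioo (0:ℝ) 1) (C : ℝ) (hC : 1 ≤ C)
    (d : ℕ) (s : ℝ) (hs : s ∈ Set.Ioo (0:ℝ) (d:ℝ))
    (ψ : Ed d → ℝ) (hψ : IsApproxId d ψ) :
    ∃ A : ℝ, 0 < A ∧ ∃ n₀ : ℕ, ∀ n : ℕ, n₀ ≤ n →
      ∀ μ : Measure (Ed d), IsProbabilityMeasure μ →
        mollE d ψ s (((2:ℝ) ^ n)⁻¹) μ ≤ ENNReal.ofReal C →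
      ∀ K : Set (Ed d), K ⊆ closedBall (0 : Ed d) 1 → MeasurableSet K →
        ENNReal.ofReal ((((2:ℝ) ^ n)⁻¹) ^ ε) ≤ μ K →
      ∃ Pf : Finset (Fin d → ℤ), Pf.Nonempty ∧
        (∀ v ∈ Pf, (dyCube d n v ∩ K).Nonempty) ∧
        (∀ m : ℕ, m ≤ n → ∀ w : Fin d → ℤ,
          (Nat.card {v : Fin d → ℤ // v ∈ Pf ∧ dyCube d n v ⊆ dyCube d m w} : ℝ)
            ≤ (A * C * (((2:ℝ) ^ n)⁻¹) ^ (-3 * ε)) * (((2:ℝ) ^ m)⁻¹) ^ s * (Pf.card : ℝ)) := by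
  obtain ⟨hε0, hε1⟩ := hε
  have hd : 1 ≤ d := Nat.cast_pos.mp (hs.1.trans hs.2)
  set c := unitBallVol d ^ 2 / 2 ^ (3 * d)
  have hc : 0 < c := by have := unitBallVol_pos d; positivity
  obtain ⟨n₀, hn₀⟩ := eventually_atTop.mp
    (eventually_mul_add_two_le_two_pow_rpow hε0 (16 * (d + 1)))
  refine ⟨√d ^ d / c, by positivity, n₀, fun n hn μ _ hE K hK hKm hμK => ?_⟩
  set δ := ((2 : ℝ) ^ n)⁻¹
  have hδ : 0 < δ := by positivity
  have hδσ : δ ≤ δ ^ ε := Real.self_le_rpow_of_le_one hδ.le (inv_le_one_of_one_le₀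
    (one_le_pow₀ one_le_two)) hε1.le
  obtain ⟨G, hGm, hKG, hball⟩ := exists_measureReal_closedBall_le_of_mollE_le hd hψ hs.1.le
    hs.2.le hδ (by linarith) (hδ.trans_le hδσ) hE hμK
  obtain ⟨P, hPne, hPK, hPcard⟩ :=
    exists_dyCube_family_card_le hd hK hKm hGm (by linarith) hKG hball
  refine ⟨P, hPne, hPK, fun m hm w => (hPcard m hm w).trans ?_⟩
  set σ := δ ^ ε
  have hσ : 0 < σ := hδ.trans_le hδσ
  have hM : 16 * ((n + 2) * (d + 1)) ≤ σ⁻¹ := by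
    rw [show σ = (((2 : ℝ) ^ n) ^ ε)⁻¹ from Real.inv_rpow (by positivity) ε, inv_inv]
    linarith [hn₀ n hn]
  have hcube : δ ^ (-3 * ε) = σ⁻¹ ^ 3 := by
    rw [mul_comm, Real.rpow_mul hδ.le, Real.rpow_neg hσ.le, inv_pow, ← Real.rpow_natCast]
    norm_num
  calc 4 * ((n + 2) * (d + 1)) * (2 * (C / c) / σ) / (σ / 2) * (√d * ((2 : ℝ) ^ m)⁻¹) ^ s *
        P.card
      = 16 * ((n + 2) * (d + 1)) * (C / c) * σ⁻¹ ^ 2 * (√d * ((2 : ℝ) ^ m)⁻¹) ^ s * P.card := by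
        field_simp; norm_num
    _ ≤ σ⁻¹ * (C / c) * σ⁻¹ ^ 2 * (√d ^ d * (((2 : ℝ) ^ m)⁻¹) ^ s) * P.card := by
        gcongr
        exact rpow_sqrt_mul_le hd (by positivity) hs.2.le
    _ = √d ^ d / c * C * δ ^ (-3 * ε) * (((2 : ℝ) ^ m)⁻¹) ^ s * P.card := by
        rw [hcube]; ring

/-- Let `ε ∈ (0,1)`, `C, d ≥ 1`, `s ∈ (0,d)`. For all sufficiently small
dyadic `δ = 2⁻ⁿ`: if `μ` is a Borel probability measure on `ℝ^d` with `I_s^δ(μ) ≤ C` and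
`K ⊂ B(1)` is Borel with `μ(K) ≥ δ^ε`, then there is a nonempty family `𝒫` of dyadic
`δ`-cubes meeting `K` which is a `(δ,s,C')`-set with `C' ≤ O_d(C δ^{-3ε})`, i.e.
`|𝒫 ∩ Q| ≤ C' Δ^s |𝒫|` for every dyadic cube `Q` of side-length `Δ ∈ [δ,1]`. -/
theorem statement9 (ε : ℝ) (hε : ε ∈ Set.Ioo (0:ℝ) 1) (C : ℝ) (hC : 1 ≤ C)
    (d : ℕ) (hd : 1 ≤ d) (s : ℝ) (hs : s ∈ Set.Ioo (0:ℝ) (d:ℝ))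
    (ψ : Ed d → ℝ) (hψ : IsApproxId d ψ) :
    ∃ A : ℝ, 0 < A ∧ ∃ n₀ : ℕ, ∀ n : ℕ, n₀ ≤ n →
      ∀ μ : Measure (Ed d), IsProbabilityMeasure μ →
        mollE d ψ s (((2:ℝ) ^ n)⁻¹) μ ≤ ENNReal.ofReal C →
      ∀ K : Set (Ed d), K ⊆ closedBall (0 : Ed d) 1 → MeasurableSet K →
        ENNReal.ofReal ((((2:ℝ) ^ n)⁻¹) ^ ε) ≤ μ K →
      ∃ Pf : Finset (Fin d → ℤ), Pf.Nonempty ∧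
        (∀ v ∈ Pf, (dyCube d n v ∩ K).Nonempty) ∧
        (∀ m : ℕ, m ≤ n → ∀ w : Fin d → ℤ,
          (Nat.card {v : Fin d → ℤ // v ∈ Pf ∧ dyCube d n v ⊆ dyCube d m w} : ℝ)
            ≤ (A * C * (((2:ℝ) ^ n)⁻¹) ^ (-3 * ε)) * (((2:ℝ) ^ m)⁻¹) ^ s * (Pf.card : ℝ)) :=
  statement9_general ε hε C hC d s hs ψ hψ
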